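/- arXiv:2605.16196 — 2 statements merged into one kernel-verified Lean document; each statement's English description precedes it below -/
import Mathlib

section
/- Under the above hypotheses (A, C, P > 0, B real, CA + BP > 0), the function f(x) = (Px − Cx²)/(A + Bx) attains its unique maximum on {x ≥ 0 : A + Bx > 0} at x* = (−A + √(A(A + BP/C)))/B when B ≠ 0 (interpreting the limit B → 0 as x* = P/(2C)). -/
/-!
At a root `x₀` of the critical-point equation `C x₀ (2A + B x₀) = P A` (the numerator of `f'`)
one has the exact identity `f x = C x₀² / A - C (x - x₀)² / (A + B x)`, so `f` is strictly
maximal at `x₀` wherever the denominator is positive. Writing `s = √(A (A + B P / C))`, the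
proposed `x*` equals `P A / (C (A + s))`, which is positive, and `A + B x* = s > 0`.
-/

section QuadOverLinear

variable {K : Type*} [Field K]

def quadOverLinear (P C A B x : K) : K := (P * x - C * x ^ 2) / (A + B * x)

theorem quadOverLinear_eq_of_crit {P C A B x₀ x : K} (hA : A ≠ 0)
    (hcrit : C * x₀ * (2 * A + B * x₀) = P * A) (hx : A + B * x ≠ 0) :
    quadOverLinear P C A B x = C * x₀ ^ 2 / A - C * (x - x₀) ^ 2 / (A + B * x) := by
  rw [quadOverLinear, div_sub_div _ _ hA hx, div_eq_div_iff hx (mul_ne_zero hA hx)]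
  linear_combination (-x) * (A + B * x) * hcrit

theorem quadOverLinear_lt_of_crit [LinearOrder K] [IsStrictOrderedRing K] {P C A B x₀ x : K}
    (hA : A ≠ 0) (hC : 0 < C) (hcrit : C * x₀ * (2 * A + B * x₀) = P * A)
    (hx₀ : A + B * x₀ ≠ 0) (hx : 0 < A + B * x) (hne : x ≠ x₀) :
    quadOverLinear P C A B x < quadOverLinear P C A B x₀ := by
  rw [quadOverLinear_eq_of_crit hA hcrit hx.ne', quadOverLinear_eq_of_crit hA hcrit hx₀,
    sub_self, zero_pow two_ne_zero, mul_zero, zero_div, sub_zero, sub_lt_self_iff]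
  have : x - x₀ ≠ 0 := sub_ne_zero.mpr hne
  positivity

end QuadOverLinear

theorem neg_add_div_eq_of_sq_eq {K : Type*} [Field K] {P C A B s : K} (hB : B ≠ 0) (hC : C ≠ 0)
    (hAs : A + s ≠ 0) (hs : s ^ 2 = A * (A + B * P / C)) :
    (-A + s) / B = P * A / (C * (A + s)) := by
  rw [div_eq_div_iff hB (mul_ne_zero hC hAs)]
  field_simp at hs
  linear_combination hs

theorem stmt_6 (P A C B : ℝ) (hP : 0 < P) (hA : 0 < A) (hC : 0 < C)
    (hB : B ≠ 0) (hCB : 0 < C * A + B * P) :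
    let f : ℝ → ℝ := fun x => (P * x - C * x ^ 2) / (A + B * x)
    let xstar := (-A + Real.sqrt (A * (A + B * P / C))) / B
    (0 ≤ xstar ∧ 0 < A + B * xstar) ∧
      ∀ x : ℝ, 0 ≤ x → 0 < A + B * x → x ≠ xstar → f x < f xstar := by
  intro f xstar
  have hrad : 0 < A * (A + B * P / C) := by
    rw [show A + B * P / C = (C * A + B * P) / C by field_simp]
    positivity
  set s := Real.sqrt (A * (A + B * P / C))
  have hs : 0 < s := Real.sqrt_pos.mpr hrad
  have hxstar : xstar = P * A / (C * (A + s)) :=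
    neg_add_div_eq_of_sq_eq hB hC.ne' (by positivity) (Real.sq_sqrt hrad.le)
  have hD : A + B * xstar = s := by
    rw [show B * xstar = -A + s from mul_div_cancel₀ _ hB]
    ring
  have hcrit : C * xstar * (2 * A + B * xstar) = P * A := by
    rw [two_mul, add_assoc, hD, hxstar]
    field_simp
  refine ⟨⟨hxstar ▸ by positivity, hD ▸ hs⟩, fun x _ hx hne => ?_⟩
  exact quadOverLinear_lt_of_crit hA.ne' hC hcrit (hD ▸ hs.ne') hx hne
end

section
/- For ρ_τ, ρ_d > 0 subject to ρ_τ + Kρ_d = (1+K)ρ with K > 1 and ρ > 0, the maximum of ρ_τρ_d/(ρ_τ + ρ_d) over the feasible set equals (1+K)ρ/(1+√K)². -/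
/-!
Writing `K = s ^ 2`, the identity `(a + s ^ 2 * b) * (a + b) = (1 + s) ^ 2 * (a * b) + (a - s * b) ^ 2`
bounds `a * b / (a + b)` by `(a + s ^ 2 * b) / (1 + s) ^ 2`, i.e. by the budget divided by
`(1 + √K) ^ 2`, with equality exactly when `a = s * b`.
-/

theorem one_add_sq_mul_mul_le (a b s : ℝ) :
    (1 + s) ^ 2 * (a * b) ≤ (a + s ^ 2 * b) * (a + b) := by
  nlinarith [sq_nonneg (a - s * b)]

theorem mul_div_add_le_div_one_add_sq {a b s : ℝ} (ha : 0 ≤ a) (hb : 0 ≤ b) (hs : 0 ≤ s) :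
    a * b / (a + b) ≤ (a + s ^ 2 * b) / (1 + s) ^ 2 := by
  rcases (add_nonneg ha hb).eq_or_lt with hab | hab
  · rw [← hab, div_zero]
    positivity
  · rw [div_le_div_iff₀ hab (by positivity), mul_comm (a * b)]
    exact one_add_sq_mul_mul_le a b s

theorem mul_div_add_eq_div_one_add_sq {b s : ℝ} (hb : b ≠ 0) (hs : 0 ≤ s) :
    s * b * b / (s * b + b) = (s * b + s ^ 2 * b) / (1 + s) ^ 2 := by
  have : 1 + s ≠ 0 := by positivity
  field_simp
  ring

theorem isGreatest_mul_div_add_of_add_sq_mul_eq {s S : ℝ} (hs : 0 < s) (hS : 0 ≤ S) :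
    IsGreatest {y : ℝ | ∃ a b : ℝ, 0 ≤ a ∧ 0 ≤ b ∧ a + s ^ 2 * b = S ∧ y = a * b / (a + b)}
      (S / (1 + s) ^ 2) := by
  constructor
  · rcases hS.eq_or_lt with rfl | hS
    · exact ⟨0, 0, le_rfl, le_rfl, by simp, by simp⟩
    set b := S / (s * (1 + s))
    have hb : 0 < b := by positivity
    have hbudget : s * b + s ^ 2 * b = S := by
      simp only [b]
      field_simp
    refine ⟨s * b, b, by positivity, hb.le, hbudget, ?_⟩
    rw [mul_div_add_eq_div_one_add_sq hb.ne' hs.le, hbudget]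
  · rintro y ⟨a, b, ha, hb, hbudget, rfl⟩
    rw [← hbudget]
    exact mul_div_add_le_div_one_add_sq ha hb hs.le

theorem stmt_11 (K ρ : ℝ) (hK : 1 < K) (hρ : 0 < ρ) :
    IsGreatest
      {y : ℝ | ∃ ρτ ρd : ℝ, 0 ≤ ρτ ∧ 0 ≤ ρd ∧ ρτ + K * ρd = (1 + K) * ρ ∧
        y = ρτ * ρd / (ρτ + ρd)}
      ((1 + K) * ρ / (1 + Real.sqrt K) ^ 2) := by
  have hK0 : 0 < K := by linarith
  have h := isGreatest_mul_div_add_of_add_sq_mul_eq (Real.sqrt_pos.2 hK0)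
    (S := (1 + K) * ρ) (by positivity)
  rwa [Real.sq_sqrt hK0.le] at h
end
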